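/- Let α, β ∈ NC(n) with α ≪ β. Then every outer block of α is β-special; moreover, the correspondence sending each β-special block V of α to the block W of β with min(V) = min(W) and max(V) = max(W) restricts to a bijection between the outer blocks of α and the outer blocks of β. -/

import Mathlib

open scoped Classical

/-- The minimum of a finset of naturals (`0` if empty). -/
noncomputable def fmin (A : Finset ℕ) : ℕ := sInf (A : Set ℕ)

/-- The maximum of a finset of naturals (`0` if empty). -/
noncomputable def fmax (A : Finset ℕ) : ℕ := sSup (A : Set ℕ)

/-- `α` is a partition of the finite set `F ⊆ ℕ`. -/
def IsPartitionOfSet (F : Finset ℕ) (α : Finset (Finset ℕ)) : Prop :=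
  (∀ V ∈ α, V.Nonempty) ∧ (∀ V ∈ α, V ⊆ F) ∧ (∀ m ∈ F, ∃ V ∈ α, m ∈ V) ∧
    ∀ V ∈ α, ∀ W ∈ α, V ≠ W → V ∩ W = ∅

/-- `α` is a partition of `{1,…,n}`. -/
def IsPartitionOf (n : ℕ) (α : Finset (Finset ℕ)) : Prop :=
  IsPartitionOfSet (Finset.Icc 1 n) α

/-- Two distinct blocks of the family `π` cross: there are `a < b < c < d` with
`a, c` in one block and `b, d` in a different block. -/
def IsCrossing (π : Finset (Finset ℕ)) : Prop :=
  ∃ A ∈ π, ∃ B ∈ π, A ≠ B ∧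
    ∃ a ∈ A, ∃ b ∈ B, ∃ c ∈ A, ∃ d ∈ B, a < b ∧ b < c ∧ c < d

/-- `α ∈ NC(n)`: a non-crossing partition of `{1,…,n}`. -/
def IsNCPartition (n : ℕ) (α : Finset (Finset ℕ)) : Prop :=
  IsPartitionOf n α ∧ ¬ IsCrossing α

/-- Reverse refinement order `α ≤ β`: every block of `α` is contained in a block of `β`
(equivalently, every block of `β` is a union of blocks of `α`). -/
def Refines (α β : Finset (Finset ℕ)) : Prop := ∀ V ∈ α, ∃ W ∈ β, V ⊆ W

/-- The partial order `α ≪ β`: `α ≤ β` and for every block `W` of `β` there is a block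
`V` of `α` containing both `min W` and `max W`. -/
def LL (α β : Finset (Finset ℕ)) : Prop :=
  Refines α β ∧ ∀ W ∈ β, ∃ V ∈ α, fmin W ∈ V ∧ fmax W ∈ V

/-- A block `V` (of `α`) is `β`-special: some block `W` of `β` has the same min and max. -/
def SpecialBlock (β : Finset (Finset ℕ)) (V : Finset ℕ) : Prop :=
  ∃ W ∈ β, fmin V = fmin W ∧ fmax V = fmax W

/-- `V` is an outer block of `α`: no block of `α` strictly nests around it. -/
def OuterBlock (α : Finset (Finset ℕ)) (V : Finset ℕ) : Prop :=
  ∀ V' ∈ α, ¬ (fmin V' < fmin V ∧ fmax V < fmax V')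

/-- `π` is a linked partition of the finite set `F ⊆ ℕ`. -/
def IsLinkedPartitionOfSet (F : Finset ℕ) (π : Finset (Finset ℕ)) : Prop :=
  (∀ A ∈ π, A.Nonempty) ∧ (∀ A ∈ π, A ⊆ F) ∧ (∀ m ∈ F, ∃ A ∈ π, m ∈ A) ∧
    ∀ A ∈ π, ∀ B ∈ π, A ≠ B →
      A ∩ B = ∅ ∨
        (2 ≤ A.card ∧ 2 ≤ B.card ∧ (A ∩ B).card = 1 ∧ fmin A ≠ fmin B ∧
          ∀ x ∈ A ∩ B, x = fmin A ∨ x = fmin B)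

/-- `π ∈ NCL(F)`: a non-crossing linked partition of the finite set `F`. -/
def IsNCLOfSet (F : Finset ℕ) (π : Finset (Finset ℕ)) : Prop :=
  IsLinkedPartitionOfSet F π ∧ ¬ IsCrossing π

/-- `π ∈ NCL(n)`: a non-crossing linked partition of `{1,…,n}`. -/
def IsNCL (n : ℕ) (π : Finset (Finset ℕ)) : Prop :=
  IsNCLOfSet (Finset.Icc 1 n) π

/-- The number of blocks of `π` containing `m`. -/
noncomputable def coverCount (π : Finset (Finset ℕ)) (m : ℕ) : ℕ :=
  (π.filter fun A => m ∈ A).card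

/-- `m` is singly-covered by `π`: it lies in exactly one block. -/
def SinglyCovered (π : Finset (Finset ℕ)) (m : ℕ) : Prop := coverCount π m = 1

/-- `m` is doubly-covered by `π`: it lies in exactly two blocks. -/
def DoublyCovered (π : Finset (Finset ℕ)) (m : ℕ) : Prop := coverCount π m = 2

/-- The partition `π̂` generated by the blocks of `π`: its blocks are the connected
components of the ground set under the relation of lying in a common block of `π`. -/
noncomputable def genPart (π : Finset (Finset ℕ)) : Finset (Finset ℕ) :=
  (π.sup id).image fun m =>
    (π.sup id).filter fun x =>
      Relation.EqvGen (fun a b => ∃ A ∈ π, a ∈ A ∧ b ∈ A) m x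

/-- The unlinking `π̌` of a linked partition `π`. -/
noncomputable def unlink (π : Finset (Finset ℕ)) : Finset (Finset ℕ) :=
  π.image fun A => if SinglyCovered π (fmin A) then A else A.erase (fmin A)

/-- The block of `α` containing `m` (empty if there is none). -/
noncomputable def blockOf (α : Finset (Finset ℕ)) (m : ℕ) : Finset ℕ :=
  (α.filter fun V => m ∈ V).sup id

/-- The successor of `m` in the cycle on the block `V` (elements in increasing order). -/
noncomputable def nextInBlock (V : Finset ℕ) (m : ℕ) : ℕ :=
  if m = fmax V then fmin V else fmin (V.filter fun x => m < x)

/-- The predecessor of `m` in the cycle on the block `V`. -/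
noncomputable def prevInBlock (V : Finset ℕ) (m : ℕ) : ℕ :=
  if m = fmin V then fmax V else fmax (V.filter fun x => x < m)

/-- The permutation `P_α` associated to a partition `α`, as a function: each block
`{i₁ < i₂ < ⋯ < iₘ}` becomes the cycle `i₁ ↦ i₂ ↦ ⋯ ↦ iₘ ↦ i₁`. -/
noncomputable def permOf (α : Finset (Finset ℕ)) (m : ℕ) : ℕ :=
  if m ∈ blockOf α m then nextInBlock (blockOf α m) m else m

/-- The inverse permutation `P_α⁻¹`, as a function. -/
noncomputable def permOfInv (α : Finset (Finset ℕ)) (m : ℕ) : ℕ :=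
  if m ∈ blockOf α m then prevInBlock (blockOf α m) m else m

/-- The action `τ·α` of a map `τ` on a partition `α = {V₁,…,V_p}`, giving
`{τ(V₁),…,τ(V_p)}`. -/
def mapPart (τ : ℕ → ℕ) (α : Finset (Finset ℕ)) : Finset (Finset ℕ) :=
  α.image fun V => V.image τ

/-- The cycled unlinking `π° := P_{π̂}⁻¹ · π̌`. -/
noncomputable def cycUnlink (π : Finset (Finset ℕ)) : Finset (Finset ℕ) :=
  mapPart (permOfInv (genPart π)) (unlink π)

/-- `NC(n)` as a finset. -/
noncomputable def NCF (n : ℕ) : Finset (Finset (Finset ℕ)) :=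
  ((Finset.Icc 1 n).powerset.powerset).filter (IsNCPartition n)

/-- `NCL(n)` as a finset. -/
noncomputable def NCLF (n : ℕ) : Finset (Finset (Finset ℕ)) :=
  ((Finset.Icc 1 n).powerset.powerset).filter (IsNCL n)

/-- The restriction `π|_E`: the blocks of `π` contained in `E`. -/
def restrictL (π : Finset (Finset ℕ)) (E : Finset ℕ) : Finset (Finset ℕ) :=
  π.filter fun A => A ⊆ E

/-- The partition `β₀` obtained from `β` by leaving blocks of size `≤ 2` intact and
breaking each block `W` with `|W| ≥ 3` into the doubleton `{min W, max W}` together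
with `|W| - 2` singletons. -/
noncomputable def breakBlocks (β : Finset (Finset ℕ)) : Finset (Finset ℕ) :=
  β.biUnion fun W =>
    if W.card ≤ 2 then {W}
    else insert {fmin W, fmax W} ((W \ {fmin W, fmax W}).image fun x => ({x} : Finset ℕ))

/-!
An outer block `V` of `α` lies in a block `W` of `β`, and `α ≪ β` gives a block `V'` of `α`
containing `min W` and `max W`, so `min V' ≤ min V` and `max V ≤ max V'`. As `V` is outer,
one of these is an equality, so `V'` meets `V` and hence `V' = V`: thus `W` has the same
extremes as `V`. Nesting of blocks is read off their extremes, and these are shared by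
corresponding blocks in both directions, so outer blocks correspond to outer blocks.
-/

lemma fmin_mem {A : Finset ℕ} (h : A.Nonempty) : fmin A ∈ A := by
  have h' : (A : Set ℕ).Nonempty := by exact_mod_cast h
  exact_mod_cast Nat.sInf_mem h'

lemma fmax_mem {A : Finset ℕ} (h : A.Nonempty) : fmax A ∈ A := by
  have h' : (A : Set ℕ).Nonempty := by exact_mod_cast h
  exact_mod_cast Nat.sSup_mem h' A.finite_toSet.bddAbove

lemma fmin_le {A : Finset ℕ} {m : ℕ} (h : m ∈ A) : fmin A ≤ m :=
  Nat.sInf_le (by exact_mod_cast h)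

lemma le_fmax {A : Finset ℕ} {m : ℕ} (h : m ∈ A) : m ≤ fmax A :=
  le_csSup A.finite_toSet.bddAbove (by exact_mod_cast h)

lemma fmin_le_fmin_of_subset {A B : Finset ℕ} (hA : A.Nonempty) (h : A ⊆ B) :
    fmin B ≤ fmin A :=
  fmin_le (h (fmin_mem hA))

lemma fmax_le_fmax_of_subset {A B : Finset ℕ} (hA : A.Nonempty) (h : A ⊆ B) :
    fmax A ≤ fmax B :=
  le_fmax (h (fmax_mem hA))

lemma IsPartitionOfSet.pairwiseDisjoint {F : Finset ℕ} {α : Finset (Finset ℕ)}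
    (h : IsPartitionOfSet F α) : (α : Set (Finset ℕ)).PairwiseDisjoint id :=
  fun V hV W hW hne => Finset.disjoint_iff_inter_eq_empty.mpr (h.2.2.2 V hV W hW hne)

section Blocks

variable {α β : Finset (Finset ℕ)}

lemma blockOf_eq (hβ : (β : Set (Finset ℕ)).PairwiseDisjoint id) {W : Finset ℕ} (hW : W ∈ β)
    {m : ℕ} (hm : m ∈ W) : blockOf β m = W := by
  have hfilter : β.filter (fun V => m ∈ V) = {W} :=
    Finset.eq_singleton_iff_unique_mem.mpr ⟨Finset.mem_filter.mpr ⟨hW, hm⟩,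
      fun V hV => (Finset.mem_filter.mp hV).elim fun hVβ hmV =>
        hβ.elim_finset hVβ hW m hmV hm⟩
  rw [blockOf, hfilter, Finset.sup_singleton, id]

lemma OuterBlock.eq_of_le_of_le (hα : (α : Set (Finset ℕ)).PairwiseDisjoint id)
    {V V' : Finset ℕ} (hV : V ∈ α) (hVne : V.Nonempty) (hout : OuterBlock α V)
    (hV' : V' ∈ α) (hV'ne : V'.Nonempty) (hmin : fmin V' ≤ fmin V) (hmax : fmax V ≤ fmax V') :
    V' = V := by
  rcases hmin.eq_or_lt with hmin | hmin
  · exact hα.elim_finset hV' hV _ (fmin_mem hV'ne) (hmin ▸ fmin_mem hVne)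
  · have hmax : fmax V' = fmax V := le_antisymm (not_lt.mp fun h => hout V' hV' ⟨hmin, h⟩) hmax
    exact hα.elim_finset hV' hV _ (fmax_mem hV'ne) (hmax ▸ fmax_mem hVne)

lemma OuterBlock.of_LL (hll : LL α β) {V W : Finset ℕ} (hV : OuterBlock α V)
    (hmin : fmin W = fmin V) (hmax : fmax W = fmax V) : OuterBlock β W := by
  rintro W' hW' ⟨hlt_min, hlt_max⟩
  obtain ⟨V', hV', hmin', hmax'⟩ := hll.2 W' hW'
  exact hV V' hV' ⟨(fmin_le hmin').trans_lt (hmin ▸ hlt_min),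
    (hmax ▸ hlt_max).trans_le (le_fmax hmax')⟩

lemma OuterBlock.of_refines (hr : Refines α β) (hne : ∀ V ∈ α, V.Nonempty) {V W : Finset ℕ}
    (hW : OuterBlock β W) (hmin : fmin V = fmin W) (hmax : fmax V = fmax W) :
    OuterBlock α V := by
  rintro V' hV' ⟨hlt_min, hlt_max⟩
  obtain ⟨W', hW', hV'W'⟩ := hr V' hV'
  exact hW W' hW' ⟨(fmin_le_fmin_of_subset (hne V' hV') hV'W').trans_lt (hmin ▸ hlt_min),
    (hmax ▸ hlt_max).trans_le (fmax_le_fmax_of_subset (hne V' hV') hV'W')⟩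

lemma LL.blockOf_fmin_of_outerBlock (hll : LL α β) (hαne : ∀ V ∈ α, V.Nonempty)
    (hα : (α : Set (Finset ℕ)).PairwiseDisjoint id) (hβ : (β : Set (Finset ℕ)).PairwiseDisjoint id)
    {V : Finset ℕ} (hV : V ∈ α) (hout : OuterBlock α V) :
    blockOf β (fmin V) ∈ β ∧ fmin (blockOf β (fmin V)) = fmin V ∧
      fmax (blockOf β (fmin V)) = fmax V := by
  obtain ⟨W, hW, hVW⟩ := hll.1 V hV
  have hVne := hαne V hV
  obtain ⟨V', hV', hmin', hmax'⟩ := hll.2 W hW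
  have hmin := fmin_le_fmin_of_subset hVne hVW
  have hmax := fmax_le_fmax_of_subset hVne hVW
  obtain rfl : V' = V := hout.eq_of_le_of_le hα hV hVne hV' (hαne V' hV')
    ((fmin_le hmin').trans hmin) (hmax.trans (le_fmax hmax'))
  rw [blockOf_eq hβ hW (hVW (fmin_mem hVne))]
  exact ⟨hW, le_antisymm hmin (fmin_le hmin'), le_antisymm (le_fmax hmax') hmax⟩

lemma LL.exists_fmin_eq_fmax_eq (hll : LL α β) (hαne : ∀ V ∈ α, V.Nonempty)
    (hβ : (β : Set (Finset ℕ)).PairwiseDisjoint id) (hβne : ∀ W ∈ β, W.Nonempty)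
    {W : Finset ℕ} (hW : W ∈ β) : ∃ V ∈ α, fmin V = fmin W ∧ fmax V = fmax W := by
  obtain ⟨V, hV, hmin, hmax⟩ := hll.2 W hW
  obtain ⟨W', hW', hVW'⟩ := hll.1 V hV
  obtain rfl : W' = W := hβ.elim_finset hW' hW _ (hVW' hmin) (fmin_mem (hβne W hW))
  exact ⟨V, hV, le_antisymm (fmin_le hmin) (fmin_le_fmin_of_subset (hαne V hV) hVW'),
    le_antisymm (fmax_le_fmax_of_subset (hαne V hV) hVW') (le_fmax hmax)⟩

end Blocks

/-- Let `α, β ∈ NC(n)` with `α ≪ β`. Then every outer block of `α` is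
`β`-special; moreover the correspondence `V ↦ W` (sending a `β`-special block `V` of `α`
to the block `W` of `β` with the same min and max, i.e. the block of `β` containing
`min V`) restricts to a bijection between the outer blocks of `α` and those of `β`. -/
theorem stmt8 (n : ℕ) (α β : Finset (Finset ℕ))
    (hα : IsNCPartition n α) (hβ : IsNCPartition n β) (hll : LL α β) :
    (∀ V ∈ α, OuterBlock α V → SpecialBlock β V) ∧
    Set.BijOn (fun V => blockOf β (fmin V))
      {V : Finset ℕ | V ∈ α ∧ OuterBlock α V}
      {W : Finset ℕ | W ∈ β ∧ OuterBlock β W} := by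
  have hαd := IsPartitionOfSet.pairwiseDisjoint hα.1
  have hβd := IsPartitionOfSet.pairwiseDisjoint hβ.1
  have key := fun V (hV : V ∈ α) (hout : OuterBlock α V) =>
    hll.blockOf_fmin_of_outerBlock hα.1.1 hαd hβd hV hout
  refine ⟨fun V hV hout => ?_, fun V ⟨hV, hout⟩ => ?_, fun V₁ ⟨hV₁, hout₁⟩ V₂ ⟨hV₂, hout₂⟩ h => ?_,
    fun W ⟨hW, hWout⟩ => ?_⟩
  · obtain ⟨hWβ, hmin, hmax⟩ := key V hV hout
    exact ⟨_, hWβ, hmin.symm, hmax.symm⟩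
  · obtain ⟨hWβ, hmin, hmax⟩ := key V hV hout
    exact ⟨hWβ, hout.of_LL hll hmin hmax⟩
  · have hmin : fmin V₁ = fmin V₂ := by
      rw [← (key V₁ hV₁ hout₁).2.1, ← (key V₂ hV₂ hout₂).2.1]
      exact congrArg fmin h
    exact hαd.elim_finset hV₁ hV₂ _ (fmin_mem (hα.1.1 V₁ hV₁)) (hmin ▸ fmin_mem (hα.1.1 V₂ hV₂))
  · obtain ⟨V, hV, hmin, hmax⟩ := hll.exists_fmin_eq_fmax_eq hα.1.1 hβd hβ.1.1 hW
    refine ⟨V, ⟨hV, hWout.of_refines hll.1 hα.1.1 hmin hmax⟩, ?_⟩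
    simp only [hmin]
    exact blockOf_eq hβd hW (fmin_mem (hβ.1.1 W hW))
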